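/- As t → 0⁺, 1 - φ(t) ∼ 2√t, i.e. (1 - φ(t))/√t → 2, where φ(t) = Re(r(t)⁻¹ g(r(t))) with r(t) = (3 - 2e^{it})⁻¹ and g the principal-branch map g(z) = (1 - √(1-z²))/z. Hence (1-φ(t))⁻¹ has a singularity of order |t|^{-1/2} at 0. -/

import Mathlib

open Real Filter

/-- `r(t) = (3 - 2e^{it})⁻¹`. -/
noncomputable def rC (t : ℝ) : ℂ := (3 - 2 * Complex.exp (Complex.I * t))⁻¹

/-- `g(z) = (1 - √(1 - z²))/z` with the principal branch of the square root. -/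
noncomputable def gC (z : ℂ) : ℂ := (1 - (1 - z ^ 2) ^ ((1 : ℂ) / 2)) / z

/-- `φ(t) = Re(r(t)⁻¹ · g(r(t)))`. -/
noncomputable def phiR (t : ℝ) : ℝ := ((rC t)⁻¹ * gC (rC t)).re

lemma sC_ne_zero (t : ℝ) : (3 - 2 * Complex.exp (Complex.I * t)) ≠ 0 := by
  intro h
  have h2 : ‖2 * Complex.exp (Complex.I * t)‖ = 2 := by
    rw [norm_mul, Complex.norm_exp]
    simp [Complex.mul_re, Complex.I_re, Complex.I_im]
  have h3 : (3 : ℂ) = 2 * Complex.exp (Complex.I * t) := by linear_combination h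
  have h4 := congrArg (fun z : ℂ => ‖z‖) h3
  rw [h2] at h4
  simp at h4

lemma rC_ne_zero (t : ℝ) : rC t ≠ 0 := by
  simp [rC, sC_ne_zero t]

/-- Splitting the principal square root over a positive real factor. -/
lemma cpow_half_ofReal_mul {t : ℝ} (ht : 0 < t) (z : ℂ) :
    ((t : ℂ) * z) ^ ((1 : ℂ) / 2) = (Real.sqrt t : ℂ) * z ^ ((1 : ℂ) / 2) := by
  rcases eq_or_ne z 0 with rfl | hz
  · simp [Complex.zero_cpow (show (1 : ℂ) / 2 ≠ 0 by norm_num)]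
  have ht' : (t : ℂ) ≠ 0 := by exact_mod_cast ht.ne'
  rw [Complex.cpow_def_of_ne_zero (mul_ne_zero ht' hz), Complex.cpow_def_of_ne_zero hz,
    Complex.log_ofReal_mul ht hz, add_mul, Complex.exp_add]
  congr 1
  have h1 : (Real.log t : ℂ) * ((1 : ℂ) / 2) = ((Real.log t / 2 : ℝ) : ℂ) := by
    push_cast; ring
  rw [h1, ← Complex.ofReal_exp]
  norm_cast
  rw [Real.sqrt_eq_rpow, Real.rpow_def_of_pos ht]
  ring_nf

/-- As `t → 0⁺`, `1 - φ(t) ∼ c√t` for an explicit constant `c > 0` (namely `c = 2`,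
coming from the expansion `1 - r(t)² = -4it + O(t²)`): the singularity of
`(1 - φ(t))⁻¹` at `0` is of order `|t|^{-1/2}`. -/
theorem one_sub_phiR_sqrt_singularity :
    ∃ c : ℝ, 0 < c ∧
      Tendsto (fun t : ℝ => (1 - phiR t) / Real.sqrt t) (nhdsWithin 0 (Set.Ioi 0)) (nhds c) := by
  classical
  set a : ℂ := (-4 * Complex.I) ^ ((1 : ℂ) / 2) with ha_def
  have hsub : nhdsWithin (0 : ℝ) (Set.Ioi 0) ≤ nhdsWithin 0 {(0 : ℝ)}ᶜ :=
    nhdsWithin_mono 0 (fun x hx => ne_of_gt hx)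
  -- (e^{it} - 1)/t → i
  have hE : Tendsto (fun t : ℝ => (Complex.exp (Complex.I * t) - 1) / t)
      (nhdsWithin 0 (Set.Ioi 0)) (nhds Complex.I) := by
    have hd : HasDerivAt (fun t : ℝ => Complex.exp (Complex.I * t)) Complex.I 0 := by
      have h1 : HasDerivAt (fun t : ℝ => Complex.I * (t : ℂ)) Complex.I 0 := by
        simpa using (Complex.ofRealCLM.hasDerivAt (x := (0 : ℝ))).const_mul Complex.I
      simpa using h1.cexp
    have hs := hasDerivAt_iff_tendsto_slope.mp hd
    have hs' := hs.mono_left hsub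
    refine hs'.congr' ?_
    filter_upwards [self_mem_nhdsWithin] with t ht
    have ht0 : (t : ℝ) ≠ 0 := ne_of_gt ht
    simp [slope, Complex.real_smul, div_eq_inv_mul]
  -- continuity of auxiliary pieces
  have hcont : Tendsto (fun t : ℝ => Complex.exp (Complex.I * t))
      (nhdsWithin 0 (Set.Ioi 0)) (nhds 1) := by
    have : ContinuousAt (fun t : ℝ => Complex.exp (Complex.I * t)) 0 :=
      (Complex.continuous_exp.comp (continuous_const.mul Complex.continuous_ofReal)).continuousAt
    simpa using this.continuousWithinAt.tendsto
  -- (1 - r(t)²)/t → -4i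
  have h1 : Tendsto (fun t : ℝ => (1 - rC t ^ 2) / (t : ℂ))
      (nhdsWithin 0 (Set.Ioi 0)) (nhds (-4 * Complex.I)) := by
    have hfact : Tendsto (fun t : ℝ =>
        (-2 : ℂ) * ((Complex.exp (Complex.I * t) - 1) / t) *
          (4 - 2 * Complex.exp (Complex.I * t)) *
          ((3 - 2 * Complex.exp (Complex.I * t)) ^ 2)⁻¹)
        (nhdsWithin 0 (Set.Ioi 0))
        (nhds ((-2 : ℂ) * Complex.I * (4 - 2 * 1) * ((3 - 2 * 1) ^ 2)⁻¹)) := by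
      refine Tendsto.mul (Tendsto.mul (tendsto_const_nhds.mul hE) ?_) ?_
      · exact (tendsto_const_nhds.sub (tendsto_const_nhds.mul hcont))
      · exact (((tendsto_const_nhds.sub (tendsto_const_nhds.mul hcont)).pow 2).inv₀
          (by norm_num))
    have hval : ((-2 : ℂ) * Complex.I * (4 - 2 * 1) * ((3 - 2 * 1) ^ 2)⁻¹)
        = -4 * Complex.I := by norm_num; ring
    rw [hval] at hfact
    refine hfact.congr' ?_
    filter_upwards [self_mem_nhdsWithin] with t ht
    have ht0 : (t : ℂ) ≠ 0 := by exact_mod_cast (ne_of_gt ht)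
    have hs := sC_ne_zero t
    simp only [rC]
    field_simp
    ring
  -- v(t) = ((1 - r²)/t)^{1/2} → a
  have hv : Tendsto (fun t : ℝ => ((1 - rC t ^ 2) / (t : ℂ)) ^ ((1 : ℂ) / 2))
      (nhdsWithin 0 (Set.Ioi 0)) (nhds a) := by
    have hca : ContinuousAt (fun z : ℂ => z ^ ((1 : ℂ) / 2)) (-4 * Complex.I) := by
      apply continuousAt_cpow_const
      rw [Complex.mem_slitPlane_iff]
      right
      simp
    exact hca.tendsto.comp h1
  -- (r² - 1)/√t → 0
  have h2 : Tendsto (fun t : ℝ => (rC t ^ 2 - 1) / ((Real.sqrt t : ℝ) : ℂ))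
      (nhdsWithin 0 (Set.Ioi 0)) (nhds 0) := by
    have hsq : Tendsto (fun t : ℝ => ((Real.sqrt t : ℝ) : ℂ))
        (nhdsWithin 0 (Set.Ioi 0)) (nhds 0) := by
      have : ContinuousAt (fun t : ℝ => ((Real.sqrt t : ℝ) : ℂ)) 0 :=
        (Complex.continuous_ofReal.comp Real.continuous_sqrt).continuousAt
      simpa using this.continuousWithinAt.tendsto
    have hmul : Tendsto (fun t : ℝ => -(((1 - rC t ^ 2) / (t : ℂ)) * ((Real.sqrt t : ℝ) : ℂ)))
        (nhdsWithin 0 (Set.Ioi 0)) (nhds (-((-4 * Complex.I) * 0))) :=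
      (h1.mul hsq).neg
    simp only [mul_zero, neg_zero] at hmul
    refine hmul.congr' ?_
    filter_upwards [self_mem_nhdsWithin] with t ht
    have ht0 : (t : ℂ) ≠ 0 := by exact_mod_cast (ne_of_gt ht)
    have hst : Real.sqrt t ≠ 0 := ne_of_gt (Real.sqrt_pos.mpr ht)
    have hst' : ((Real.sqrt t : ℝ) : ℂ) ≠ 0 := by exact_mod_cast hst
    have htt : ((Real.sqrt t : ℝ) : ℂ) * ((Real.sqrt t : ℝ) : ℂ) = (t : ℂ) := by
      rw [← Complex.ofReal_mul, Real.mul_self_sqrt (le_of_lt ht)]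
    field_simp
    linear_combination (-(1 : ℂ) + rC t ^ 2) * htt
  -- r² → 1
  have h3 : Tendsto (fun t : ℝ => rC t ^ 2) (nhdsWithin 0 (Set.Ioi 0)) (nhds 1) := by
    have : Tendsto (fun t : ℝ => rC t) (nhdsWithin 0 (Set.Ioi 0)) (nhds 1) := by
      have hc : ContinuousAt rC 0 := by
        apply ContinuousAt.inv₀
        · exact (continuous_const.sub (continuous_const.mul
            (Complex.continuous_exp.comp (continuous_const.mul
              Complex.continuous_ofReal)))).continuousAt
        · simpa using sC_ne_zero 0
      have h0 : rC 0 = 1 := by simp [rC]; norm_num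
      simpa [h0] using hc.continuousWithinAt.tendsto
    simpa using this.pow 2
  -- the combined limit
  have hG : Tendsto (fun t : ℝ =>
      ((rC t ^ 2 - 1) / ((Real.sqrt t : ℝ) : ℂ)
        + ((1 - rC t ^ 2) / (t : ℂ)) ^ ((1 : ℂ) / 2)) / rC t ^ 2)
      (nhdsWithin 0 (Set.Ioi 0)) (nhds ((0 + a) / 1)) :=
    (h2.add hv).div h3 one_ne_zero
  rw [zero_add, div_one] at hG
  have hGre : Tendsto (fun t : ℝ =>
      (((rC t ^ 2 - 1) / ((Real.sqrt t : ℝ) : ℂ)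
        + ((1 - rC t ^ 2) / (t : ℂ)) ^ ((1 : ℂ) / 2)) / rC t ^ 2).re)
      (nhdsWithin 0 (Set.Ioi 0)) (nhds a.re) :=
    (Complex.continuous_re.continuousAt.tendsto).comp hG
  refine ⟨a.re, ?_, ?_⟩
  · -- positivity of Re a
    have hne : (-4 * Complex.I) ≠ 0 := by
      simp
    rw [ha_def, Complex.cpow_def_of_ne_zero hne, Complex.exp_re]
    apply mul_pos (Real.exp_pos _)
    apply Real.cos_pos_of_mem_Ioo
    have him : (Complex.log (-4 * Complex.I) * ((1 : ℂ) / 2)).im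
        = Complex.arg (-4 * Complex.I) / 2 := by
      simp [Complex.log_im, Complex.mul_im, Complex.div_re, Complex.div_im]
      ring
    rw [him]
    have harg1 : Complex.arg (-4 * Complex.I) < 0 := by
      rw [Complex.arg_neg_iff]
      simp
    have harg2 : -Real.pi < Complex.arg (-4 * Complex.I) := Complex.neg_pi_lt_arg _
    constructor
    · nlinarith [Real.pi_pos]
    · nlinarith [Real.pi_pos]
  · refine hGre.congr' ?_
    filter_upwards [self_mem_nhdsWithin] with t ht
    have ht0 : (t : ℂ) ≠ 0 := by exact_mod_cast (ne_of_gt ht)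
    have hst : (0 : ℝ) < Real.sqrt t := Real.sqrt_pos.mpr ht
    have hst' : ((Real.sqrt t : ℝ) : ℂ) ≠ 0 := by exact_mod_cast hst.ne'
    have hr := rC_ne_zero t
    have htt : ((Real.sqrt t : ℝ) : ℂ) * ((Real.sqrt t : ℝ) : ℂ) = (t : ℂ) := by
      rw [← Complex.ofReal_mul, Real.mul_self_sqrt (le_of_lt ht)]
    -- square-root splitting
    have hu : (1 - rC t ^ 2) ^ ((1 : ℂ) / 2)
        = ((Real.sqrt t : ℝ) : ℂ) * ((1 - rC t ^ 2) / (t : ℂ)) ^ ((1 : ℂ) / 2) := by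
      have : (1 - rC t ^ 2) = (t : ℂ) * ((1 - rC t ^ 2) / (t : ℂ)) := by
        field_simp
      rw [this, cpow_half_ofReal_mul ht]
      congr 2
      field_simp
    -- complex identity
    have hC : (1 - (rC t)⁻¹ * gC (rC t)) / ((Real.sqrt t : ℝ) : ℂ)
        = ((rC t ^ 2 - 1) / ((Real.sqrt t : ℝ) : ℂ)
            + ((1 - rC t ^ 2) / (t : ℂ)) ^ ((1 : ℂ) / 2)) / rC t ^ 2 := by
      rw [gC, hu]
      field_simp
      ring
    have hre : (1 - phiR t) / Real.sqrt t
        = ((1 - (rC t)⁻¹ * gC (rC t)) / ((Real.sqrt t : ℝ) : ℂ)).re := by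
      rw [Complex.div_ofReal_re]
      congr 1
    rw [hre, hC]
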